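/- arXiv:2006.07839 — 2 statements merged into one kernel-verified Lean document; each statement's English description precedes it below -/
import Mathlib

section
/- Let M be a positive definite symmetric d×d real matrix and w ∈ ℝ^d. Then the function F(u) := sqrt(⟨u, M u⟩ + (max{0, -⟨u, w⟩})²) is convex on ℝ^d. -/
/-!
Factor `M = Bᵀ B`, so that `⟪u, M u⟫ = ‖B u‖²` and
`F u = √(f u ^ 2 + g u ^ 2)` with `f u = ‖B u‖` and `g u = max 0 (-⟪u, w⟫)`, both convex and
nonnegative. Such a combination is convex: at a convex combination, `f` and `g` are bounded by
the convex combinations of their values, and the Euclidean norm on `ℝ²` is monotone on the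
nonnegative quadrant and subadditive.
-/

open scoped RealInnerProductSpace MatrixOrder
open Matrix

theorem Real.sqrt_sq_add_sq_add_le (x₁ y₁ x₂ y₂ : ℝ) :
    √((x₁ + x₂) ^ 2 + (y₁ + y₂) ^ 2) ≤ √(x₁ ^ 2 + y₁ ^ 2) + √(x₂ ^ 2 + y₂ ^ 2) := by
  simpa [Complex.norm_def, Complex.normSq_apply, sq] using norm_add_le (⟨x₁, y₁⟩ : ℂ) ⟨x₂, y₂⟩

theorem Real.sqrt_mul_sq_add_mul_sq {c : ℝ} (hc : 0 ≤ c) (x y : ℝ) :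
    √((c * x) ^ 2 + (c * y) ^ 2) = c * √(x ^ 2 + y ^ 2) := by
  rw [show (c * x) ^ 2 + (c * y) ^ 2 = c ^ 2 * (x ^ 2 + y ^ 2) by ring,
    Real.sqrt_mul (sq_nonneg c), Real.sqrt_sq hc]

theorem ConvexOn.sqrt_sq_add_sq {E : Type*} [AddCommGroup E] [Module ℝ E] {s : Set E}
    {f g : E → ℝ} (hf : ConvexOn ℝ s f) (hg : ConvexOn ℝ s g)
    (hf₀ : ∀ x ∈ s, 0 ≤ f x) (hg₀ : ∀ x ∈ s, 0 ≤ g x) :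
    ConvexOn ℝ s fun x => √(f x ^ 2 + g x ^ 2) := by
  refine ⟨hf.1, fun x hx y hy a b ha hb hab => ?_⟩
  have hz : a • x + b • y ∈ s := hf.1 hx hy ha hb hab
  have hfz : f (a • x + b • y) ≤ a * f x + b * f y := hf.2 hx hy ha hb hab
  have hgz : g (a • x + b • y) ≤ a * g x + b * g y := hg.2 hx hy ha hb hab
  calc √(f (a • x + b • y) ^ 2 + g (a • x + b • y) ^ 2)
      ≤ √((a * f x + b * f y) ^ 2 + (a * g x + b * g y) ^ 2) := by
        gcongr
        exacts [hf₀ _ hz, hg₀ _ hz]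
    _ ≤ √((a * f x) ^ 2 + (a * g x) ^ 2) + √((b * f y) ^ 2 + (b * g y) ^ 2) :=
        Real.sqrt_sq_add_sq_add_le _ _ _ _
    _ = a • √(f x ^ 2 + g x ^ 2) + b • √(f y ^ 2 + g y ^ 2) := by
        rw [Real.sqrt_mul_sq_add_mul_sq ha, Real.sqrt_mul_sq_add_mul_sq hb, smul_eq_mul,
          smul_eq_mul]

theorem Matrix.PosSemidef.exists_inner_mulVec_eq_norm_sq {n : Type*} [Fintype n] [DecidableEq n]
    {M : Matrix n n ℝ} (hM : M.PosSemidef) :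
    ∃ B : Matrix n n ℝ, ∀ u : EuclideanSpace ℝ n,
      ⟪u, WithLp.toLp 2 (M *ᵥ u)⟫ = ‖WithLp.toLp 2 (B *ᵥ u)‖ ^ 2 := by
  obtain ⟨B, rfl⟩ := CStarAlgebra.nonneg_iff_eq_star_mul_self.mp hM.nonneg
  refine ⟨B, fun u => ?_⟩
  rw [← real_inner_self_eq_norm_sq]
  simp only [EuclideanSpace.inner_eq_star_dotProduct, ← mulVec_mulVec, star_trivial,
    star_eq_conjTranspose, conjTranspose_eq_transpose_of_trivial, mulVec_transpose,
    dotProduct_mulVec]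

/-- The asymmetric quadratic metric
`F(u) = sqrt(⟨u, M u⟩ + (max{0, -⟨u, w⟩})²)` is convex on `ℝ^d`
for a symmetric positive definite matrix `M` and vector `w`. -/
theorem asymmetric_quadratic_metric_convex (d : ℕ)
    (M : Matrix (Fin d) (Fin d) ℝ) (hM : M.PosDef)
    (w : EuclideanSpace ℝ (Fin d)) :
    ConvexOn ℝ Set.univ (fun u : EuclideanSpace ℝ (Fin d) =>
      Real.sqrt (⟪u, (WithLp.toLp 2 (M.mulVec u) : EuclideanSpace ℝ (Fin d))⟫
        + (max 0 (-⟪u, w⟫)) ^ 2)) := by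
  obtain ⟨B, hB⟩ := hM.posSemidef.exists_inner_mulVec_eq_norm_sq
  have hnorm : ConvexOn ℝ Set.univ fun u : EuclideanSpace ℝ (Fin d) =>
      ‖WithLp.toLp 2 (B *ᵥ u)‖ :=
    (convexOn_norm convex_univ).comp_linearMap (toEuclideanLin B)
  have hneg : ConvexOn ℝ Set.univ fun u : EuclideanSpace ℝ (Fin d) => max 0 (-⟪u, w⟫) := by
    refine (convexOn_const 0 convex_univ).sup ?_
    exact ((-(innerₛₗ ℝ w)).convexOn convex_univ).congr fun u _ => by simp [real_inner_comm]
  simpa only [hB] using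
    hnorm.sqrt_sq_add_sq hneg (fun _ _ => norm_nonneg _) (fun _ _ => le_max_left _ _)
end

section
/- Let M be a positive definite symmetric d×d real matrix and w ∈ ℝ^d. Then F(u) := sqrt(⟨u, M u⟩ + (max{0, -⟨u, w⟩})²) satisfies the triangle inequality: F(u + v) ≤ F(u) + F(v) for all u, v ∈ ℝ^d. -/
/-!
Factor `M = Bᴴ * B`. Then `F u` is the Euclidean length of the planar vector
`(‖B u‖, max 0 (-⟪u, w⟫))`, whose two coordinates are nonnegative and subadditive in `u`.
Since the Euclidean length in the plane is monotone in nonnegative coordinates, the triangle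
inequality for `F` follows from Minkowski's inequality in `ℝ²`.
-/

open scoped RealInnerProductSpace
open scoped MatrixOrder
open Matrix

theorem Matrix.inner_toLp_conjTranspose_mul_mulVec {𝕜 m n : Type*} [RCLike 𝕜] [Fintype m]
    [Fintype n] (B : Matrix m n 𝕜) (x y : EuclideanSpace 𝕜 n) :
    inner 𝕜 x (WithLp.toLp 2 ((Bᴴ * B) *ᵥ y)) =
      inner 𝕜 (WithLp.toLp 2 (B *ᵥ x)) (WithLp.toLp 2 (B *ᵥ y)) := by
  rw [EuclideanSpace.inner_eq_star_dotProduct, EuclideanSpace.inner_toLp_toLp, ← mulVec_mulVec,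
    dotProduct_comm, dotProduct_mulVec, star_mulVec, dotProduct_comm]

theorem Matrix.norm_toLp_mulVec_add_le {𝕜 m n : Type*} [RCLike 𝕜] [Fintype m] [Fintype n]
    (B : Matrix m n 𝕜) (x y : n → 𝕜) :
    ‖(WithLp.toLp 2 (B *ᵥ (x + y)) : EuclideanSpace 𝕜 m)‖ ≤
      ‖(WithLp.toLp 2 (B *ᵥ x) : EuclideanSpace 𝕜 m)‖ +
        ‖(WithLp.toLp 2 (B *ᵥ y) : EuclideanSpace 𝕜 m)‖ := by
  rw [mulVec_add, WithLp.toLp_add]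
  exact norm_add_le _ _

theorem Real.sqrt_add_sq_add_add_sq_le (a₁ a₂ b₁ b₂ : ℝ) :
    √((a₁ + a₂) ^ 2 + (b₁ + b₂) ^ 2) ≤ √(a₁ ^ 2 + b₁ ^ 2) + √(a₂ ^ 2 + b₂ ^ 2) := by
  have hnorm (a b : ℝ) : ‖!₂[a, b]‖ = √(a ^ 2 + b ^ 2) := by
    simp [EuclideanSpace.norm_eq, Fin.sum_univ_two]
  have hadd : !₂[a₁ + a₂, b₁ + b₂] = !₂[a₁, b₁] + !₂[a₂, b₂] := by
    ext i; fin_cases i <;> rfl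
  simpa only [← hnorm, hadd] using norm_add_le !₂[a₁, b₁] !₂[a₂, b₂]

theorem Real.sqrt_sq_add_sq_le_of_le {a b a₁ a₂ b₁ b₂ : ℝ} (ha : 0 ≤ a) (hb : 0 ≤ b)
    (ha₁₂ : a ≤ a₁ + a₂) (hb₁₂ : b ≤ b₁ + b₂) :
    √(a ^ 2 + b ^ 2) ≤ √(a₁ ^ 2 + b₁ ^ 2) + √(a₂ ^ 2 + b₂ ^ 2) :=
  (Real.sqrt_le_sqrt (add_le_add (pow_le_pow_left₀ ha ha₁₂ 2) (pow_le_pow_left₀ hb hb₁₂ 2))).trans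
    (Real.sqrt_add_sq_add_add_sq_le a₁ a₂ b₁ b₂)

theorem max_zero_neg_add_le {α : Type*} [AddCommGroup α] [LinearOrder α] [IsOrderedAddMonoid α]
    (a b : α) : max 0 (-(a + b)) ≤ max 0 (-a) + max 0 (-b) :=
  max_le (add_nonneg (le_max_left _ _) (le_max_left _ _))
    (neg_add a b ▸ add_le_add (le_max_right _ _) (le_max_right _ _))

/-- The asymmetric quadratic metric satisfies the triangle
inequality `F(u + v) ≤ F(u) + F(v)`. -/
theorem asymmetric_quadratic_metric_triangle (d : ℕ)
    (M : Matrix (Fin d) (Fin d) ℝ) (hM : M.PosDef)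
    (w : EuclideanSpace ℝ (Fin d))
    (F : EuclideanSpace ℝ (Fin d) → ℝ)
    (hF : ∀ u, F u = Real.sqrt (⟪u, (WithLp.toLp 2 (M.mulVec u) : EuclideanSpace ℝ (Fin d))⟫
        + (max 0 (-⟪u, w⟫)) ^ 2)) :
    ∀ u v : EuclideanSpace ℝ (Fin d), F (u + v) ≤ F u + F v := by
  intro u v
  obtain ⟨B, rfl⟩ := CStarAlgebra.nonneg_iff_eq_star_mul_self.mp hM.posSemidef.nonneg
  simp only [hF, star_eq_conjTranspose, inner_toLp_conjTranspose_mul_mulVec,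
    real_inner_self_eq_norm_sq]
  refine Real.sqrt_sq_add_sq_le_of_le (norm_nonneg _) (le_max_left _ _) ?_ ?_
  · rw [WithLp.ofLp_add]
    exact norm_toLp_mulVec_add_le B _ _
  · rw [inner_add_left]
    exact max_zero_neg_add_le _ _
end
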